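/- In the enveloping algebra U(g) of a post-Lie algebra with unshuffle coproduct Δ, Grossman–Larson product ∗, and GL-antipode S_∗, the concatenation product is recovered from ∗ by A·B = A₍₁₎ ∗ (S_∗(A₍₂₎) ▷ B). -/
import Mathlib


open TensorProduct

/-- A post-Lie algebra: a Lie algebra `(L, ⁅·,·⁆)` together with a bilinear product `▷`
(denoted `t`) satisfying the two post-Lie compatibility axioms. -/
structure PostLie (k : Type*) (L : Type*) [CommRing k] [LieRing L] [LieAlgebra k L] where
  t : L →ₗ[k] L →ₗ[k] L
  ax1 : ∀ x y z : L, t x ⁅y, z⁆ = ⁅t x y, z⁆ + ⁅y, t x z⁆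
  ax2 : ∀ x y z : L,
    t ⁅x, y⁆ z = (t x (t y z) - t (t x y) z) - (t y (t x z) - t (t y x) z)

/-- The Grossman–Larson product `U ∗ V := U₍₁₎ · (U₍₂₎ ▷ V)` associated to a coproduct
`Δ` and an extended product `t` on an algebra `A`, as a bilinear map. -/
noncomputable def glOf {k A : Type*} [CommRing k] [Ring A] [Algebra k A]
    (Δ : A →ₐ[k] A ⊗[k] A) (t : A →ₗ[k] A →ₗ[k] A) : A →ₗ[k] A →ₗ[k] A :=
  (TensorProduct.lift
    ((LinearMap.lcomp k (A →ₗ[k] A) t).comp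
      ((LinearMap.llcomp k A A A).comp (LinearMap.mul k A)))).comp Δ.toLinearMap

/-- In the enveloping algebra `U(g)` of a post-Lie algebra, with
unshuffle coproduct `Δ`, Grossman–Larson product `∗`, and GL-antipode `S_∗`, the
concatenation product is recovered from `∗` by `A·B = A₍₁₎ ∗ (S_∗(A₍₂₎) ▷ B)`. -/
theorem envAlg_product_from_GL_and_antipode {k L : Type*} [CommRing k] [LieRing L]
    [LieAlgebra k L] (P : PostLie k L)
    (Δ : UniversalEnvelopingAlgebra k L →ₐ[k]
      UniversalEnvelopingAlgebra k L ⊗[k] UniversalEnvelopingAlgebra k L)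
    (ε : UniversalEnvelopingAlgebra k L →ₐ[k] k)
    (t : UniversalEnvelopingAlgebra k L →ₗ[k]
      UniversalEnvelopingAlgebra k L →ₗ[k] UniversalEnvelopingAlgebra k L)
    (Sstar : UniversalEnvelopingAlgebra k L →ₗ[k] UniversalEnvelopingAlgebra k L)
    -- the generators of U(g) are primitive for Δ (unshuffle coproduct)
    (hprim : ∀ x : L, Δ (UniversalEnvelopingAlgebra.ι k x) =
      UniversalEnvelopingAlgebra.ι k x ⊗ₜ 1 + 1 ⊗ₜ UniversalEnvelopingAlgebra.ι k x)
    -- coassociativity of Δ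
    (hcoassoc : ∀ a, (TensorProduct.assoc k _ _ _)
        ((TensorProduct.map Δ.toLinearMap LinearMap.id) (Δ a)) =
      (TensorProduct.map LinearMap.id Δ.toLinearMap) (Δ a))
    -- counit laws for ε
    (hcounitl : ∀ a, (TensorProduct.lid k (UniversalEnvelopingAlgebra k L))
        ((TensorProduct.map ε.toLinearMap LinearMap.id) (Δ a)) = a)
    (hcounitr : ∀ a, (TensorProduct.rid k (UniversalEnvelopingAlgebra k L))
        ((TensorProduct.map LinearMap.id ε.toLinearMap) (Δ a)) = a)
    -- the extended product: 1 ▷ B = B, it restricts to the post-Lie product on g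
    (hone : ∀ B, t 1 B = B)
    (hbase : ∀ x y : L, t (UniversalEnvelopingAlgebra.ι k x)
      (UniversalEnvelopingAlgebra.ι k y) = UniversalEnvelopingAlgebra.ι k (P.t x y))
    -- U ▷ (V ▷ W) = (U ∗ V) ▷ W
    (hproduct2 : ∀ U V W, t U (t V W) = t (glOf Δ t U V) W)
    -- S_∗ is the antipode of the Hopf algebra (U(g), ∗, Δ): A₍₁₎ ∗ S_∗(A₍₂₎) = ε(A)1
    (hantipode : ∀ a, TensorProduct.lift ((glOf Δ t).compl₂ Sstar) (Δ a) =
      algebraMap k (UniversalEnvelopingAlgebra k L) (ε a)) :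
    ∀ a b : UniversalEnvelopingAlgebra k L,
      a * b = TensorProduct.lift ((glOf Δ t).compl₂ ((t.flip b).comp Sstar)) (Δ a) := by
  intro a b
  set H : UniversalEnvelopingAlgebra k L ⊗[k] UniversalEnvelopingAlgebra k L →ₗ[k]
      UniversalEnvelopingAlgebra k L :=
    (t.flip b).comp (TensorProduct.lift ((glOf Δ t).compl₂ Sstar)) with hH
  set L2 := TensorProduct.lift ((LinearMap.mul k (UniversalEnvelopingAlgebra k L)).compl₂ H)
    with hL2
  set Flift := TensorProduct.lift
      ((LinearMap.lcomp k (UniversalEnvelopingAlgebra k L →ₗ[k] UniversalEnvelopingAlgebra k L) t).comp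
        ((LinearMap.llcomp k (UniversalEnvelopingAlgebra k L) (UniversalEnvelopingAlgebra k L)
          (UniversalEnvelopingAlgebra k L)).comp
            (LinearMap.mul k (UniversalEnvelopingAlgebra k L)))) with hF
  have hglOf : ∀ u, glOf Δ t u = Flift (Δ u) := fun u => rfl
  have hpure : ∀ (v₁ v₂ Y : UniversalEnvelopingAlgebra k L),
      Flift (v₁ ⊗ₜ[k] v₂) Y = v₁ * t v₂ Y := by
    intro v₁ v₂ Y
    simp [hF, LinearMap.lcomp_apply, LinearMap.llcomp_apply, LinearMap.mul_apply']
  have stepAB : TensorProduct.lift ((glOf Δ t).compl₂ ((t.flip b).comp Sstar)) (Δ a)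
      = L2 ((TensorProduct.assoc k _ _ _)
          ((TensorProduct.map Δ.toLinearMap LinearMap.id) (Δ a))) := by
    have hmaps : TensorProduct.lift ((glOf Δ t).compl₂ ((t.flip b).comp Sstar))
        = L2.comp (((TensorProduct.assoc k _ _ _).toLinearMap).comp
            (TensorProduct.map Δ.toLinearMap LinearMap.id)) := by
      apply TensorProduct.ext'
      intro u w
      have inner : (Flift.flip (t (Sstar w) b))
          = L2.comp (((TensorProduct.assoc k _ _ _).toLinearMap).comp
              ((TensorProduct.mk k
                (UniversalEnvelopingAlgebra k L ⊗[k] UniversalEnvelopingAlgebra k L)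
                (UniversalEnvelopingAlgebra k L)).flip w)) := by
        apply TensorProduct.ext'
        intro v₁ v₂
        simp only [LinearMap.flip_apply, LinearMap.comp_apply,
          TensorProduct.mk_apply, LinearEquiv.coe_coe, TensorProduct.assoc_tmul,
          hL2, TensorProduct.lift.tmul, LinearMap.compl₂_apply,
          LinearMap.mul_apply', hH, hpure]
        rw [hproduct2, hglOf]
      have h2 := LinearMap.congr_fun inner (Δ u)
      simp only [LinearMap.flip_apply, LinearMap.comp_apply, LinearEquiv.coe_coe,
        TensorProduct.mk_apply] at h2
      simp only [LinearMap.comp_apply, TensorProduct.map_tmul, LinearMap.id_coe, id_eq,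
        TensorProduct.lift.tmul, LinearMap.compl₂_apply, LinearMap.flip_apply,
        AlgHom.toLinearMap_apply]
      rw [hglOf]
      exact h2
    rw [hmaps]; rfl
  have stepC : L2 ((TensorProduct.map LinearMap.id Δ.toLinearMap) (Δ a)) = a * b := by
    have hmaps : L2.comp (TensorProduct.map LinearMap.id Δ.toLinearMap)
        = (LinearMap.mulRight k b).comp
            ((TensorProduct.rid k (UniversalEnvelopingAlgebra k L)).toLinearMap.comp
              (TensorProduct.map LinearMap.id ε.toLinearMap)) := by
      apply TensorProduct.ext'
      intro u w
      have hHw : H (Δ w) = t (algebraMap k (UniversalEnvelopingAlgebra k L) (ε w)) b := by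
        simp [hH, hantipode w]
      simp only [LinearMap.comp_apply, TensorProduct.map_tmul, LinearMap.id_coe,
        id_eq, hL2, TensorProduct.lift.tmul, LinearMap.compl₂_apply,
        LinearMap.mul_apply', AlgHom.toLinearMap_apply, hHw, LinearEquiv.coe_coe,
        TensorProduct.rid_tmul, LinearMap.mulRight_apply]
      rw [Algebra.algebraMap_eq_smul_one]
      simp [hone, mul_smul_comm, smul_mul_assoc]
    have h := LinearMap.congr_fun hmaps (Δ a)
    simp only [LinearMap.comp_apply, LinearEquiv.coe_coe] at h
    rw [h, hcounitr a]
    simp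
  calc a * b = L2 ((TensorProduct.map LinearMap.id Δ.toLinearMap) (Δ a)) := stepC.symm
    _ = L2 ((TensorProduct.assoc k _ _ _)
          ((TensorProduct.map Δ.toLinearMap LinearMap.id) (Δ a))) := by rw [hcoassoc a]
    _ = _ := stepAB.symm
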